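/- arXiv:1803.01571 — 2 statements merged into one kernel-verified Lean document; each statement's English description precedes it below -/
import Mathlib

section
/- Let C_φ be a cutting for a knowledge base T and φ that is totally ordered by inclusion, and let ψ ∨ ψ' be a semantic disjunction. If φ ▷ ψ and φ ▷ ψ' (both with respect to C_φ), then φ ▷ ψ ∨ ψ' (with respect to C_φ). (Right disjunction ROR.) -/
variable {Sen M : Type*}

/-- The class of models of a set of sentences in a satisfaction system. -/
def ModS (sat : M → Sen → Prop) (T : Set Sen) : Set M := {m | ∀ φ ∈ T, sat m φ}

/-- The trivial models: those satisfying every sentence. -/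
def TrivS (sat : M → Sen → Prop) : Set M := {m | ∀ φ : Sen, sat m φ}

/-- A cutting for a knowledge base `T` and a sentence `φ`. -/
structure IsCutting (sat : M → Sen → Prop) (T : Set Sen) (φ : Sen) (C : Set (Set M)) : Prop where
  subset_mod : ∀ A ∈ C, A ⊆ ModS sat (T ∪ {φ})
  triv_lt : ∀ A ∈ C, TrivS sat ⊂ A
  union_closed : ∀ S ⊆ C, S.Nonempty → ⋃₀ S ∈ C
  top_mem : ModS sat (T ∪ {φ}) ∈ C
  wf : C.WellFoundedOn (fun A B => A ⊂ B)

/-- The set of ⊆-minimal elements of a family of sets. -/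
def MinCut (C : Set (Set M)) : Set (Set M) := {A ∈ C | ∀ B ∈ C, ¬ B ⊂ A}

/-- The explanatory relation based on a cutting `C` (for the observation whose cutting is `C`):
`ψ` is an explanation iff `Mod(T ∪ {ψ}) ≠ Triv` and `Mod(T ∪ {ψ})` is contained in some
minimal element of `C`. -/
def ExplRel (sat : M → Sen → Prop) (T : Set Sen) (C : Set (Set M)) (ψ : Sen) : Prop :=
  ModS sat (T ∪ {ψ}) ≠ TrivS sat ∧ ∃ A ∈ MinCut C, ModS sat (T ∪ {ψ}) ⊆ A

section

variable (sat : M → Sen → Prop)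

theorem modS_union (T U : Set Sen) : ModS sat (T ∪ U) = ModS sat T ∩ ModS sat U := by
  ext m
  simp only [ModS, Set.mem_union, Set.mem_inter_iff, Set.mem_ofPred_eq, or_imp, forall_and]

theorem trivS_subset_modS (T : Set Sen) : TrivS sat ⊆ ModS sat T :=
  fun _ hm φ _ => hm φ

theorem modS_union_singleton_of_disj {T : Set Sen} {ψ ψ' χ : Sen}
    (hdisj : ModS sat {χ} = ModS sat {ψ} ∪ ModS sat {ψ'}) :
    ModS sat (T ∪ {χ}) = ModS sat (T ∪ {ψ}) ∪ ModS sat (T ∪ {ψ'}) := by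
  simp only [modS_union, hdisj, Set.inter_union_distrib_left]

end

theorem IsChain.subsingleton_minCut {C : Set (Set M)} (hC : IsChain (· ⊆ ·) C) :
    (MinCut C).Subsingleton := by
  intro A hA B hB
  by_contra hne
  rcases hC hA.1 hB.1 hne with hAB | hBA
  · exact hB.2 A hA.1 (hAB.ssubset_of_ne hne)
  · exact hA.2 B hB.1 (hBA.ssubset_of_ne (Ne.symm hne))

theorem stmt_13_general (sat : M → Sen → Prop) (T : Set Sen)
    (ψ ψ' χ : Sen) (Cφ : Set (Set M))
    (hchain : IsChain (· ⊆ ·) Cφ)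
    (hdisj : ModS sat {χ} = ModS sat {ψ} ∪ ModS sat {ψ'})
    (h1 : ExplRel sat T Cφ ψ) (h2 : ExplRel sat T Cφ ψ') :
    ExplRel sat T Cφ χ := by
  obtain ⟨hnontriv, A, hA, hψA⟩ := h1
  obtain ⟨-, B, hB, hψ'B⟩ := h2
  have hχ := modS_union_singleton_of_disj (T := T) sat hdisj
  obtain rfl : A = B := hchain.subsingleton_minCut hA hB
  refine ⟨fun htriv => hnontriv ?_, A, hA, hχ ▸ Set.union_subset hψA hψ'B⟩
  exact (htriv ▸ hχ ▸ Set.subset_union_left).antisymm (trivS_subset_modS sat _)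

theorem stmt_13 (sat : M → Sen → Prop) (T : Set Sen) (hT : T.Finite)
    (φ ψ ψ' χ : Sen) (Cφ : Set (Set M)) (hC : IsCutting sat T φ Cφ)
    (hchain : IsChain (· ⊆ ·) Cφ)
    (hdisj : ModS sat {χ} = ModS sat {ψ} ∪ ModS sat {ψ'})
    (h1 : ExplRel sat T Cφ ψ) (h2 : ExplRel sat T Cφ ψ') :
    ExplRel sat T Cφ χ :=
  stmt_13_general sat T ψ ψ' χ Cφ hchain hdisj h1 h2
end

section
/- Let C_φ be a cutting for a knowledge base T and φ, let C_{φ'} be a cutting for T and φ', and let φ ∨ φ' be a semantic disjunction. Then C_φ ⊕ C_{φ'} = {A ∪ B | A ∈ C_φ, B ∈ C_{φ'}} is a cutting for T and φ ∨ φ'. -/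
variable {Sen M : Type*}

/-!
Every `X = A ∪ B` in `C ⊻ D` is the union of its two canonical components: the union of all
members of `C` below `X`, and the same for `D`. By union-closedness these lie in `C` and `D`, and
they are monotone in `X`. Taking the components of a union of members of `C ⊻ D` shows that
`C ⊻ D` is union-closed; and `X ↦ (components of X)` turns a strictly descending chain in `C ⊻ D`
into one in `C × D` with the product order, which is well-founded. The semantic disjunction makes
`Mod(T ∪ {φ ∨ φ'}) = Mod(T ∪ {φ}) ∪ Mod(T ∪ {φ'})` the top element of `C ⊻ D`.
-/

open scoped SetFamily

lemma Set.WellFoundedOn.prod_lt {α β : Type*} [Preorder α] [Preorder β] {s : Set α} {t : Set β}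
    (hs : s.WellFoundedOn (· < ·)) (ht : t.WellFoundedOn (· < ·)) :
    (s ×ˢ t).WellFoundedOn (· < ·) :=
  have : WellFoundedLT s := ⟨hs⟩
  have : WellFoundedLT t := ⟨ht⟩
  InvImage.wf (fun p : ↥(s ×ˢ t) => ((⟨p.1.1, p.2.1⟩ : s), (⟨p.1.2, p.2.2⟩ : t)))
    wellFounded_lt

section CompleteLattice

variable {α : Type*} [CompleteLattice α] {C D : Set α} {a b x : α}

def NonemptySSupClosed (C : Set α) : Prop := ∀ S ⊆ C, S.Nonempty → sSup S ∈ C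

def supBelow (C : Set α) (x : α) : α := sSup {a ∈ C | a ≤ x}

lemma supBelow_le : supBelow C x ≤ x := sSup_le fun _ h => h.2

lemma le_supBelow (ha : a ∈ C) (hax : a ≤ x) : a ≤ supBelow C x := le_sSup ⟨ha, hax⟩

lemma supBelow_mono : Monotone (supBelow C) :=
  fun _ _ hxy => sSup_le_sSup fun _ ha => ⟨ha.1, ha.2.trans hxy⟩

lemma NonemptySSupClosed.supBelow_mem (hC : NonemptySSupClosed C) (ha : a ∈ C) (hax : a ≤ x) :
    supBelow C x ∈ C :=
  hC _ (fun _ h => h.1) ⟨a, ha, hax⟩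

lemma supBelow_sup_supBelow_of_mem_sups (hx : x ∈ C ⊻ D) : supBelow C x ⊔ supBelow D x = x := by
  obtain ⟨a, ha, b, hb, rfl⟩ := hx
  exact le_antisymm (sup_le supBelow_le supBelow_le)
    (sup_le_sup (le_supBelow ha le_sup_left) (le_supBelow hb le_sup_right))

lemma mem_sups_of_le_supBelow_sup_supBelow (hC : NonemptySSupClosed C)
    (hD : NonemptySSupClosed D) (ha : a ∈ C) (hax : a ≤ x) (hb : b ∈ D) (hbx : b ≤ x)
    (hx : x ≤ supBelow C x ⊔ supBelow D x) : x ∈ C ⊻ D :=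
  ⟨_, hC.supBelow_mem ha hax, _, hD.supBelow_mem hb hbx,
    le_antisymm (sup_le supBelow_le supBelow_le) hx⟩

lemma NonemptySSupClosed.sups (hC : NonemptySSupClosed C) (hD : NonemptySSupClosed D) :
    NonemptySSupClosed (C ⊻ D) := by
  rintro S hS ⟨x₀, hx₀⟩
  obtain ⟨a, ha, b, hb, hab⟩ := hS hx₀
  have hx₀S : x₀ ≤ sSup S := le_sSup hx₀
  refine mem_sups_of_le_supBelow_sup_supBelow hC hD ha (le_sup_left.trans_eq hab |>.trans hx₀S)
    hb (le_sup_right.trans_eq hab |>.trans hx₀S) (sSup_le fun x hx => ?_)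
  rw [← supBelow_sup_supBelow_of_mem_sups (hS hx)]
  exact sup_le_sup (supBelow_mono (le_sSup hx)) (supBelow_mono (le_sSup hx))

lemma wellFoundedOn_sups (hC : NonemptySSupClosed C) (hD : NonemptySSupClosed D)
    (hCwf : C.WellFoundedOn (· < ·)) (hDwf : D.WellFoundedOn (· < ·)) :
    (C ⊻ D).WellFoundedOn (· < ·) := by
  let g : α → α × α := fun x => (supBelow C x, supBelow D x)
  have hmaps : Set.MapsTo g (C ⊻ D) (C ×ˢ D) := by
    rintro x hx
    obtain ⟨a, ha, b, hb, rfl⟩ := hx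
    exact ⟨hC.supBelow_mem ha le_sup_left, hD.supBelow_mem hb le_sup_right⟩
  refine (hCwf.prod_lt hDwf |>.mapsTo g hmaps).mono' fun x hx y hy hxy => ?_
  refine lt_of_le_of_ne ⟨supBelow_mono hxy.le, supBelow_mono hxy.le⟩ fun hg => hxy.ne ?_
  rw [← supBelow_sup_supBelow_of_mem_sups hx, ← supBelow_sup_supBelow_of_mem_sups hy]
  exact congrArg (fun p : α × α => p.1 ⊔ p.2) hg

end CompleteLattice

lemma ModS_union (sat : M → Sen → Prop) (T U : Set Sen) :
    ModS sat (T ∪ U) = ModS sat T ∩ ModS sat U := by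
  ext m
  simp [ModS, or_imp, forall_and]

lemma ModS_union_singleton_of_disj {sat : M → Sen → Prop} {T : Set Sen} {φ φ' χ : Sen}
    (hdisj : ModS sat {χ} = ModS sat {φ} ∪ ModS sat {φ'}) :
    ModS sat (T ∪ {χ}) = ModS sat (T ∪ {φ}) ∪ ModS sat (T ∪ {φ'}) := by
  simp only [ModS_union, hdisj, Set.inter_union_distrib_left]

theorem IsCutting.sups {sat : M → Sen → Prop} {T : Set Sen} {φ φ' χ : Sen}
    {C D : Set (Set M)} (hC : IsCutting sat T φ C) (hD : IsCutting sat T φ' D)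
    (hχ : ModS sat (T ∪ {χ}) = ModS sat (T ∪ {φ}) ∪ ModS sat (T ∪ {φ'})) :
    IsCutting sat T χ (C ⊻ D) where
  subset_mod := by
    rintro _ ⟨A, hA, B, hB, rfl⟩
    rw [hχ]
    exact Set.union_subset_union (hC.subset_mod A hA) (hD.subset_mod B hB)
  triv_lt := by
    rintro _ ⟨A, hA, B, hB, rfl⟩
    exact (hC.triv_lt A hA).trans_subset Set.subset_union_left
  union_closed := NonemptySSupClosed.sups hC.union_closed hD.union_closed
  top_mem := hχ ▸ Set.sup_mem_sups hC.top_mem hD.top_mem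
  wf := wellFoundedOn_sups hC.union_closed hD.union_closed hC.wf hD.wf

theorem stmt_15_general (sat : M → Sen → Prop) (T : Set Sen)
    (φ φ' χ : Sen) (Cφ Cφ' : Set (Set M))
    (hCφ : IsCutting sat T φ Cφ) (hCφ' : IsCutting sat T φ' Cφ')
    (hdisj : ModS sat {χ} = ModS sat {φ} ∪ ModS sat {φ'}) :
    IsCutting sat T χ {X | ∃ A ∈ Cφ, ∃ B ∈ Cφ', X = A ∪ B} := by
  have hsups : {X | ∃ A ∈ Cφ, ∃ B ∈ Cφ', X = A ∪ B} = Cφ ⊻ Cφ' := by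
    ext X
    simp [eq_comm]
  rw [hsups]
  exact hCφ.sups hCφ' (ModS_union_singleton_of_disj hdisj)

theorem stmt_15 (sat : M → Sen → Prop) (T : Set Sen) (hT : T.Finite)
    (φ φ' χ : Sen) (Cφ Cφ' : Set (Set M))
    (hCφ : IsCutting sat T φ Cφ) (hCφ' : IsCutting sat T φ' Cφ')
    (hdisj : ModS sat {χ} = ModS sat {φ} ∪ ModS sat {φ'}) :
    IsCutting sat T χ {X | ∃ A ∈ Cφ, ∃ B ∈ Cφ', X = A ∪ B} :=
  stmt_15_general sat T φ φ' χ Cφ Cφ' hCφ hCφ' hdisj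
end
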